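/- arXiv:2108.10466 — 2 statements merged into one kernel-verified Lean document; each statement's English description precedes it below -/
import Mathlib

section
/- Let $r \geq 3$ be odd and $q = e^{2\pi i/r}$. Then the quantum factorial $[N]!$ is a nonzero real number for all integers $0 \leq N \leq r-1$; it is positive for $0 \leq N \leq (r-1)/2$, and for every integer $N$ with $(r-1)/2 \leq N \leq r-1$ its sign is $(-1)^{N - (r-1)/2}$, i.e. $(-1)^{N-(r-1)/2}\,[N]! > 0$. -/
open scoped Real
open Complex Finset

noncomputable section

/-- The quantum integer `[n]` at `q = exp(2πi/r)`. -/
def qint (r : ℕ) (n : ℤ) : ℂ :=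
  (Complex.exp (2 * Real.pi * Complex.I / r) ^ n -
    Complex.exp (2 * Real.pi * Complex.I / r) ^ (-n)) /
  (Complex.exp (2 * Real.pi * Complex.I / r) -
    (Complex.exp (2 * Real.pi * Complex.I / r))⁻¹)

/-- The quantum factorial `[N]! = ∏_{k=1}^N [k]`, with `[0]! = 1`. -/
def qfact (r N : ℕ) : ℂ := ∏ k ∈ Finset.Icc 1 N, qint r (k : ℤ)

/-- A triple `(a₁,a₂,a₃)` of elements of `I_r = {0,…,r-2}` is `r`-admissible. -/
def AdmissibleTriple (r a₁ a₂ a₃ : ℕ) : Prop :=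
  a₁ ≤ r - 2 ∧ a₂ ≤ r - 2 ∧ a₃ ≤ r - 2 ∧
  Even (a₁ + a₂ + a₃) ∧
  a₁ + a₂ + a₃ ≤ 2 * (r - 2) ∧
  a₃ ≤ a₁ + a₂ ∧ a₂ ≤ a₁ + a₃ ∧ a₁ ≤ a₂ + a₃

/-- A 6-tuple `(a₁,…,a₆)` is `r`-admissible. -/
def Admissible6 (r a₁ a₂ a₃ a₄ a₅ a₆ : ℕ) : Prop :=
  AdmissibleTriple r a₁ a₂ a₃ ∧ AdmissibleTriple r a₁ a₅ a₆ ∧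
  AdmissibleTriple r a₂ a₄ a₆ ∧ AdmissibleTriple r a₃ a₄ a₅

/-- `Δ(a₁,a₂,a₃)`, using the principal complex square root, which realizes the
convention `√y = i√|y|` for negative real `y`. -/
def qdelta (r a₁ a₂ a₃ : ℕ) : ℂ :=
  (qfact r ((a₁ + a₂ - a₃) / 2) * qfact r ((a₁ + a₃ - a₂) / 2) *
      qfact r ((a₂ + a₃ - a₁) / 2) / qfact r ((a₁ + a₂ + a₃) / 2 + 1)) ^ (1 / 2 : ℂ)

/-- The quantum 6j-symbol `|a₁ a₂ a₃; a₄ a₅ a₆|` at `q = exp(2πi/r)`. -/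
def sixj (r a₁ a₂ a₃ a₄ a₅ a₆ : ℕ) : ℂ :=
  Complex.I ^ (-(a₁ + a₂ + a₃ + a₄ + a₅ + a₆ : ℤ)) *
    qdelta r a₁ a₂ a₃ * qdelta r a₁ a₅ a₆ * qdelta r a₂ a₄ a₆ * qdelta r a₃ a₄ a₅ *
    ∑ k ∈ Finset.Icc
        (max (max ((a₁ + a₂ + a₃) / 2) ((a₁ + a₅ + a₆) / 2))
             (max ((a₂ + a₄ + a₆) / 2) ((a₃ + a₄ + a₅) / 2)))
        (min ((a₁ + a₂ + a₄ + a₅) / 2)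
             (min ((a₁ + a₃ + a₄ + a₆) / 2) ((a₂ + a₃ + a₅ + a₆) / 2))),
      ((-1 : ℂ) ^ k * qfact r (k + 1)) /
        (qfact r (k - (a₁ + a₂ + a₃) / 2) * qfact r (k - (a₁ + a₅ + a₆) / 2) *
         qfact r (k - (a₂ + a₄ + a₆) / 2) * qfact r (k - (a₃ + a₄ + a₅) / 2) *
         qfact r ((a₁ + a₂ + a₄ + a₅) / 2 - k) * qfact r ((a₁ + a₃ + a₄ + a₆) / 2 - k) *
         qfact r ((a₂ + a₃ + a₅ + a₆) / 2 - k))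

/-- `n_r = (r-1)/2` if `r ≡ 1 mod 4`, and `n_r = (r-3)/2` if `r ≡ 3 mod 4`. -/
def nr (r : ℕ) : ℕ := if r % 4 = 1 then (r - 1) / 2 else (r - 3) / 2

/-!
At `q = exp(2πi/r)` the quantum integer is `[k] = sin(2πk/r) / sin(2π/r)`, a real number. For odd
`r = 2m + 1` it is positive for `1 ≤ k ≤ m` (angle in `(0, π)`) and negative for
`m < k ≤ 2m` (angle in `(π, 2π)`). So `[N]!` is positive up to `N = m`, and each further factor
flips its sign.
-/

def realQint (r : ℕ) (n : ℤ) : ℝ := Real.sin (2 * π * n / r) / Real.sin (2 * π / r)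

def realQfact (r N : ℕ) : ℝ := ∏ k ∈ Icc 1 N, realQint r k

lemma exp_mul_I_sub_exp_neg_mul_I (x : ℝ) :
    exp (x * I) - exp (-(x * I)) = 2 * I * (Real.sin x : ℂ) := by
  rw [exp_mul_I, ← neg_mul, exp_mul_I, cos_neg, sin_neg, ofReal_sin]
  ring

lemma qint_eq_ofReal (r : ℕ) (n : ℤ) : qint r n = (realQint r n : ℂ) := by
  have hq : 2 * (π : ℂ) * I / r = ((2 * π / r : ℝ) : ℂ) * I := by push_cast; ring
  have hpow (m : ℤ) :
      exp (((2 * π / r : ℝ) : ℂ) * I) ^ m = exp (((2 * π * m / r : ℝ) : ℂ) * I) := by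
    rw [← exp_int_mul]; congr 1; push_cast; ring
  rw [qint, hq, hpow, hpow, ← exp_neg, Int.cast_neg, mul_neg, neg_div, ofReal_neg, neg_mul,
    exp_mul_I_sub_exp_neg_mul_I, exp_mul_I_sub_exp_neg_mul_I,
    mul_div_mul_left _ _ (mul_ne_zero two_ne_zero I_ne_zero), realQint, ofReal_div]

lemma qfact_eq_ofReal (r N : ℕ) : qfact r N = (realQfact r N : ℂ) := by
  rw [qfact, realQfact, ofReal_prod]
  exact prod_congr rfl fun k _ => qint_eq_ofReal r k

lemma sin_two_pi_mul_div_pos {r k : ℕ} (hk : 0 < k) (hkr : 2 * k < r) :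
    0 < Real.sin (2 * π * k / r) := by
  have hr : (0 : ℝ) < r := by norm_cast; omega
  have hkr' : 2 * (k : ℝ) < r := by exact_mod_cast hkr
  apply Real.sin_pos_of_pos_of_lt_pi
  · positivity
  · rw [div_lt_iff₀ hr]; nlinarith [Real.pi_pos]

lemma sin_two_pi_mul_div_neg {r k : ℕ} (hrk : r < 2 * k) (hkr : k < r) :
    Real.sin (2 * π * k / r) < 0 := by
  have hr : (0 : ℝ) < r := by norm_cast; omega
  have hrk' : (r : ℝ) < 2 * k := by exact_mod_cast hrk
  have hkr' : (k : ℝ) < r := by exact_mod_cast hkr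
  rw [← Real.sin_sub_two_pi]
  apply Real.sin_neg_of_neg_of_neg_pi_lt
  · rw [sub_neg, div_lt_iff₀ hr]; nlinarith [Real.pi_pos]
  · rw [lt_sub_iff_add_lt, lt_div_iff₀ hr]; nlinarith [Real.pi_pos]

lemma sin_two_pi_div_pos {r : ℕ} (hr : 2 < r) : 0 < Real.sin (2 * π / r) := by
  simpa using sin_two_pi_mul_div_pos (k := 1) one_pos hr

lemma realQint_pos {r k : ℕ} (hk : 0 < k) (hkr : 2 * k < r) : 0 < realQint r k :=
  div_pos (sin_two_pi_mul_div_pos hk hkr) (sin_two_pi_div_pos (by omega))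

lemma realQint_neg {r k : ℕ} (hrk : r < 2 * k) (hkr : k < r) : realQint r k < 0 :=
  div_neg_of_neg_of_pos (sin_two_pi_mul_div_neg hrk hkr) (sin_two_pi_div_pos (by omega))

lemma realQfact_succ (r N : ℕ) : realQfact r (N + 1) = realQfact r N * realQint r (N + 1) := by
  rw [realQfact, realQfact, prod_Icc_succ_top (by omega)]
  push_cast; rfl

lemma realQfact_pos {r N : ℕ} (hN : 2 * N < r) : 0 < realQfact r N :=
  prod_pos fun k hk => by
    obtain ⟨hk, hkN⟩ := mem_Icc.mp hk
    exact realQint_pos hk (by omega)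

lemma neg_one_pow_mul_realQfact_pos {m N : ℕ} (hmN : m ≤ N) (hN : N < 2 * m + 1) :
    0 < (-1 : ℝ) ^ (N - m) * realQfact (2 * m + 1) N := by
  induction N, hmN using Nat.le_induction with
  | base => simpa using realQfact_pos (by omega)
  | succ N hmN ih =>
    have hneg : realQint (2 * m + 1) (N + 1 : ℕ) < 0 := realQint_neg (by omega) hN
    push_cast at hneg
    calc 0 < ((-1) ^ (N - m) * realQfact (2 * m + 1) N) * -realQint (2 * m + 1) (N + 1) :=
          mul_pos (ih (by omega)) (neg_pos.mpr hneg)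
      _ = (-1) ^ (N + 1 - m) * realQfact (2 * m + 1) (N + 1) := by
          rw [realQfact_succ, Nat.sub_add_comm hmN, pow_succ]; ring

theorem qfact_real_and_signs_general (r : ℕ) (hodd : Odd r) :
    (∀ N : ℕ, N ≤ r - 1 → (qfact r N).im = 0 ∧ qfact r N ≠ 0) ∧
    (∀ N : ℕ, N ≤ (r - 1) / 2 → 0 < (qfact r N).re) ∧
    (∀ N : ℕ, (r - 1) / 2 ≤ N → N ≤ r - 1 →
      0 < (-1 : ℝ) ^ (N - (r - 1) / 2) * (qfact r N).re) := by
  obtain ⟨m, rfl⟩ := hodd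
  simp only [show 2 * m + 1 - 1 = 2 * m by omega, show 2 * m / 2 = m by omega,
    qfact_eq_ofReal, ofReal_im, ofReal_re, ne_eq, ofReal_eq_zero]
  refine ⟨fun N hN => ⟨trivial, ?_⟩, fun N hN => realQfact_pos (by omega),
    fun N hmN hN => neg_one_pow_mul_realQfact_pos hmN (by omega)⟩
  rcases le_total N m with hNm | hmN
  · exact (realQfact_pos (by omega)).ne'
  · exact right_ne_zero_of_mul (neg_one_pow_mul_realQfact_pos hmN (by omega)).ne'

theorem qfact_real_and_signs (r : ℕ) (hr : 3 ≤ r) (hodd : Odd r) :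
    (∀ N : ℕ, N ≤ r - 1 → (qfact r N).im = 0 ∧ qfact r N ≠ 0) ∧
    (∀ N : ℕ, N ≤ (r - 1) / 2 → 0 < (qfact r N).re) ∧
    (∀ N : ℕ, (r - 1) / 2 ≤ N → N ≤ r - 1 →
      0 < (-1 : ℝ) ^ (N - (r - 1) / 2) * (qfact r N).re) :=
  qfact_real_and_signs_general r hodd
end
end

section
/- Let $r \geq 7$ with $r \equiv 3 \pmod 4$ and $q = e^{2\pi i/r}$. Then the quantum 6j-symbol $\left|\begin{smallmatrix} (r-3)/2 & (3r-5)/4 & (3r-5)/4 \\ (r-3)/2 & (3r-5)/4 & (3r-5)/4 \end{smallmatrix}\right|$ is a positive real number; explicitly, it equals $\Delta\!\left(\tfrac{r-3}{2}, \tfrac{3r-5}{4}, \tfrac{3r-5}{4}\right)^4 \cdot \dfrac{(-1)^{r-2}\,[r-1]!}{[\tfrac{r-3}{4}]!^2\,[\tfrac{r-1}{2}]!} > 0$. -/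
open scoped Real
open Complex Finset

noncomputable section

lemma exp_zpow (r : ℕ) (k : ℤ) :
    Complex.exp (2 * Real.pi * Complex.I / r) ^ k -
      Complex.exp (2 * Real.pi * Complex.I / r) ^ (-k) =
    2 * (Real.sin (2 * Real.pi * k / r) : ℂ) * Complex.I := by
  rw [← Complex.exp_int_mul, ← Complex.exp_int_mul,
    show ((k : ℂ) * (2 * Real.pi * Complex.I / r)) = ((2 * Real.pi * k / r : ℝ) : ℂ) * Complex.I by
      push_cast; ring,
    show ((-k : ℤ) : ℂ) * (2 * Real.pi * Complex.I / r) = (-(2 * Real.pi * k / r : ℝ) : ℂ) * Complex.I by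
      push_cast; ring,
    Complex.exp_mul_I, Complex.exp_mul_I]
  push_cast
  rw [Complex.cos_neg, Complex.sin_neg]
  ring

lemma qint_eq (r : ℕ) (n : ℤ) :
    qint r n = ((Real.sin (2 * Real.pi * n / r) / Real.sin (2 * Real.pi / r) : ℝ) : ℂ) := by
  unfold qint
  rw [show Complex.exp (2 * Real.pi * Complex.I / r) -
      (Complex.exp (2 * Real.pi * Complex.I / r))⁻¹
      = Complex.exp (2 * Real.pi * Complex.I / r) ^ (1 : ℤ) -
        Complex.exp (2 * Real.pi * Complex.I / r) ^ (-(1 : ℤ)) by rw [zpow_one, zpow_neg_one],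
    exp_zpow, exp_zpow]
  push_cast
  rw [show ((2:ℂ) * Real.pi * 1 / r) = 2 * Real.pi / r by ring]
  rcases eq_or_ne (Complex.sin (2 * Real.pi / r)) 0 with h | h
  · simp [h]
  · field_simp

def qintR (r n : ℕ) : ℝ := Real.sin (2 * Real.pi * n / r) / Real.sin (2 * Real.pi / r)
def qfactR (r N : ℕ) : ℝ := ∏ k ∈ Finset.Icc 1 N, qintR r k

lemma qfact_eq (r N : ℕ) : qfact r N = ((qfactR r N : ℝ) : ℂ) := by
  unfold qfact qfactR
  rw [Complex.ofReal_prod]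
  refine Finset.prod_congr rfl fun k _ => ?_
  rw [qint_eq]
  norm_num [qintR]

lemma qintR_pos (r n : ℕ) (hr : 3 ≤ r) (h1 : 1 ≤ n) (h2 : 2 * n < r) : 0 < qintR r n := by
  have hrpos : (0:ℝ) < r := by positivity
  have hden : 0 < Real.sin (2 * Real.pi / r) := by
    apply Real.sin_pos_of_pos_of_lt_pi
    · positivity
    · rw [div_lt_iff₀ hrpos]
      have : (3:ℝ) ≤ r := by exact_mod_cast hr
      nlinarith [Real.pi_pos]
  have hnum : 0 < Real.sin (2 * Real.pi * n / r) := by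
    apply Real.sin_pos_of_pos_of_lt_pi
    · have : (1:ℝ) ≤ n := by exact_mod_cast h1
      positivity
    · rw [div_lt_iff₀ hrpos]
      have : (2 * n : ℝ) < r := by exact_mod_cast h2
      nlinarith [Real.pi_pos]
  exact div_pos hnum hden

lemma qintR_neg (r n : ℕ) (hr : 3 ≤ r) (h1 : r < 2 * n) (h2 : n < r) : qintR r n < 0 := by
  have hrpos : (0:ℝ) < r := by positivity
  have hden : 0 < Real.sin (2 * Real.pi / r) := by
    apply Real.sin_pos_of_pos_of_lt_pi
    · positivity
    · rw [div_lt_iff₀ hrpos]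
      have : (3:ℝ) ≤ r := by exact_mod_cast hr
      nlinarith [Real.pi_pos]
  have hnum : Real.sin (2 * Real.pi * n / r) < 0 := by
    have hpos : 0 < Real.sin (2 * Real.pi * n / r - Real.pi) := by
      apply Real.sin_pos_of_pos_of_lt_pi
      · rw [sub_pos, lt_div_iff₀ hrpos]
        have : (r:ℝ) < 2 * n := by exact_mod_cast h1
        nlinarith [Real.pi_pos]
      · rw [sub_lt_iff_lt_add, div_lt_iff₀ hrpos]
        have : (n:ℝ) < r := by exact_mod_cast h2
        nlinarith [Real.pi_pos]
    have := Real.sin_sub_pi (2 * Real.pi * n / r)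
    linarith
  exact div_neg_of_neg_of_pos hnum hden

lemma prod_neg_odd {s : Finset ℕ} {f : ℕ → ℝ} (h : ∀ i ∈ s, f i < 0) (hc : Odd s.card) :
    ∏ i ∈ s, f i < 0 := by
  have h1 : ∏ i ∈ s, (-f i) = (-1 : ℝ) ^ s.card * ∏ i ∈ s, f i := by
    rw [← Finset.prod_const (-1 : ℝ), ← Finset.prod_mul_distrib]
    exact Finset.prod_congr rfl fun i _ => by ring
  have h2 : 0 < ∏ i ∈ s, (-f i) := Finset.prod_pos fun i hi => neg_pos.2 (h i hi)
  rw [h1, hc.neg_one_pow] at h2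
  linarith

lemma qfact_zero_of_le (r N : ℕ) (hr : 1 ≤ r) (h : r ≤ N) : qfact r N = 0 := by
  apply Finset.prod_eq_zero (i := r) (by simp [Finset.mem_Icc]; omega)
  rw [qint_eq]
  have : (2 : ℝ) * Real.pi * (r : ℤ) / r = 2 * Real.pi := by
    have : (r : ℝ) ≠ 0 := by positivity
    push_cast
    field_simp
  rw [this, Real.sin_two_pi]
  simp

lemma qfact_zero (r : ℕ) : qfact r 0 = 1 := by simp [qfact]

lemma Ipow4 (j : ℤ) : Complex.I ^ (4 * j) = 1 := by
  rw [zpow_mul, show ((4:ℤ)) = ((4:ℕ):ℤ) by norm_num, zpow_natCast, Complex.I_pow_four, one_zpow]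
lemma qdelta_comm (m : ℕ) :
    qdelta (4*m+3) (3*m+1) (2*m) (3*m+1) = qdelta (4*m+3) (2*m) (3*m+1) (3*m+1) := by
  unfold qdelta
  rw [show (3*m+1 + 2*m - (3*m+1))/2 = m by omega,
    show (3*m+1 + (3*m+1) - 2*m)/2 = 2*m+1 by omega,
    show (2*m + (3*m+1) - (3*m+1))/2 = m by omega,
    show (3*m+1 + 2*m + (3*m+1))/2 + 1 = 4*m+2 by omega,
    show (2*m + (3*m+1) + (3*m+1))/2 + 1 = 4*m+2 by omega]
  congr 1
  ring

lemma sixj_eval (m : ℕ) (hm : 1 ≤ m) :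
    sixj (4*m+3) (2*m) (3*m+1) (3*m+1) (2*m) (3*m+1) (3*m+1)
      = qdelta (4*m+3) (2*m) (3*m+1) (3*m+1) ^ 4 *
        (((-1:ℂ) ^ (4*m+1) * qfact (4*m+3) (4*m+2)) /
          (qfact (4*m+3) m ^ 2 * qfact (4*m+3) (2*m+1))) := by
  unfold sixj
  rw [show (2*m + (3*m+1) + (3*m+1))/2 = 4*m+1 by omega,
    show (3*m+1 + 2*m + (3*m+1))/2 = 4*m+1 by omega,
    show (2*m + (3*m+1) + 2*m + (3*m+1))/2 = 5*m+1 by omega,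
    show (3*m+1 + (3*m+1) + (3*m+1) + (3*m+1))/2 = 6*m+2 by omega,
    max_self, max_self,
    show min (5*m+1) (6*m+2) = 5*m+1 by omega, min_self,
    qdelta_comm]
  have hmem : 4*m+1 ∈ Finset.Icc (4*m+1) (5*m+1) := by
    simp [Finset.mem_Icc]; omega
  have hzero : ∀ b ∈ Finset.Icc (4*m+1) (5*m+1), b ≠ 4*m+1 →
      ((-1 : ℂ) ^ b * qfact (4*m+3) (b + 1)) /
        (qfact (4*m+3) (b - (4*m+1)) * qfact (4*m+3) (b - (4*m+1)) *
         qfact (4*m+3) (b - (4*m+1)) * qfact (4*m+3) (b - (4*m+1)) *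
         qfact (4*m+3) (5*m+1 - b) * qfact (4*m+3) (5*m+1 - b) *
         qfact (4*m+3) (6*m+2 - b)) = 0 := by
    intro b hb hne
    simp only [Finset.mem_Icc] at hb
    rw [qfact_zero_of_le (4*m+3) (b+1) (by omega) (by omega)]
    simp
  rw [Finset.sum_eq_single_of_mem (4*m+1) hmem hzero,
    show 4*m+1 - (4*m+1) = 0 by omega,
    show 5*m+1 - (4*m+1) = m by omega,
    show 6*m+2 - (4*m+1) = 2*m+1 by omega,
    show 4*m+1+1 = 4*m+2 by omega,
    qfact_zero,
    show (-((2*m : ℕ) + (3*m+1 : ℕ) + (3*m+1 : ℕ) + (2*m : ℕ) + (3*m+1 : ℕ) + (3*m+1 : ℕ) : ℤ))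
      = 4 * (-(4*(m:ℤ)+1)) by push_cast; ring,
    Ipow4]
  ring

theorem special_case_high (r : ℕ) (hr : 7 ≤ r) (hmod : r % 4 = 3) :
    sixj r ((r - 3) / 2) ((3 * r - 5) / 4) ((3 * r - 5) / 4)
        ((r - 3) / 2) ((3 * r - 5) / 4) ((3 * r - 5) / 4) =
      qdelta r ((r - 3) / 2) ((3 * r - 5) / 4) ((3 * r - 5) / 4) ^ 4 *
        (((-1 : ℂ) ^ (r - 2) * qfact r (r - 1)) /
          (qfact r ((r - 3) / 4) ^ 2 * qfact r ((r - 1) / 2))) ∧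
    (sixj r ((r - 3) / 2) ((3 * r - 5) / 4) ((3 * r - 5) / 4)
        ((r - 3) / 2) ((3 * r - 5) / 4) ((3 * r - 5) / 4)).im = 0 ∧
    0 < (sixj r ((r - 3) / 2) ((3 * r - 5) / 4) ((3 * r - 5) / 4)
        ((r - 3) / 2) ((3 * r - 5) / 4) ((3 * r - 5) / 4)).re := by
  obtain ⟨m, rfl⟩ : ∃ m, r = 4 * m + 3 := ⟨r / 4, by omega⟩
  have hm : 1 ≤ m := by omega
  rw [show (4*m+3 - 3)/2 = 2*m by omega,
    show (3*(4*m+3) - 5)/4 = 3*m+1 by omega,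
    show (4*m+3 - 3)/4 = m by omega,
    show (4*m+3 - 1)/2 = 2*m+1 by omega,
    show 4*m+3 - 2 = 4*m+1 by omega,
    show 4*m+3 - 1 = 4*m+2 by omega]
  -- real quantities
  set R := 4*m+3 with hR
  have ha : 0 < qfactR R m := by
    apply Finset.prod_pos
    intro i hi
    simp only [Finset.mem_Icc] at hi
    exact qintR_pos R i (by omega) hi.1 (by omega)
  have hb : 0 < qfactR R (2*m+1) := by
    apply Finset.prod_pos
    intro i hi
    simp only [Finset.mem_Icc] at hi
    exact qintR_pos R i (by omega) hi.1 (by omega)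
  have hc : qfactR R (4*m+2) < 0 := by
    have hIcc : ∀ N : ℕ, Finset.Icc 1 N = Finset.Ioc 0 N := by
      intro N; ext x; simp [Finset.mem_Icc, Finset.mem_Ioc]; omega
    have hsplit : qfactR R (4*m+2)
        = (∏ i ∈ Finset.Ioc 0 (2*m+1), qintR R i) * ∏ i ∈ Finset.Ioc (2*m+1) (4*m+2), qintR R i := by
      unfold qfactR
      rw [hIcc, Finset.prod_Ioc_consecutive _ (by omega) (by omega)]
    rw [hsplit]
    apply mul_neg_of_pos_of_neg
    · rw [← hIcc]; exact hb
    · apply prod_neg_odd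
      · intro i hi
        simp only [Finset.mem_Ioc] at hi
        exact qintR_neg R i (by omega) (by omega) (by omega)
      · rw [Nat.card_Ioc]
        exact ⟨m, by omega⟩
  have key := sixj_eval m hm
  have hD : qdelta R (2*m) (3*m+1) (3*m+1) ^ 4
      = (((qfactR R m * qfactR R m * qfactR R (2*m+1) / qfactR R (4*m+2) : ℝ)) : ℂ) ^ 2 := by
    unfold qdelta
    rw [show (2*m + (3*m+1) - (3*m+1))/2 = m by omega,
      show (3*m+1 + (3*m+1) - 2*m)/2 = 2*m+1 by omega,
      show (2*m + (3*m+1) + (3*m+1))/2 + 1 = 4*m+2 by omega,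
      qfact_eq, qfact_eq, qfact_eq,
      ← Complex.ofReal_mul, ← Complex.ofReal_mul, ← Complex.ofReal_div]
    set Z := ((qfactR R m * qfactR R m * qfactR R (2*m+1) / qfactR R (4*m+2) : ℝ) : ℂ) with hZ
    have h2 : Z ^ ((1:ℂ)/2) = Z ^ (((2:ℕ):ℂ))⁻¹ := by norm_num
    calc (Z ^ ((1:ℂ)/2)) ^ 4 = ((Z ^ (((2:ℕ):ℂ))⁻¹) ^ 2) ^ 2 := by rw [h2]; ring
      _ = Z ^ 2 := by rw [Complex.cpow_nat_inv_pow _ two_ne_zero]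
  have ha' : ((qfactR R m : ℝ) : ℂ) ≠ 0 := Complex.ofReal_ne_zero.2 (ne_of_gt ha)
  have hb' : ((qfactR R (2*m+1) : ℝ) : ℂ) ≠ 0 := Complex.ofReal_ne_zero.2 (ne_of_gt hb)
  have hc' : ((qfactR R (4*m+2) : ℝ) : ℂ) ≠ 0 := Complex.ofReal_ne_zero.2 (ne_of_lt hc)
  have hval : sixj R (2*m) (3*m+1) (3*m+1) (2*m) (3*m+1) (3*m+1)
      = (((qfactR R m * qfactR R m * qfactR R (2*m+1) / (- qfactR R (4*m+2)) : ℝ)) : ℂ) := by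
    rw [key, hD, qfact_eq, qfact_eq, qfact_eq,
      show ((-1:ℂ) ^ (4*m+1)) = -1 from Odd.neg_one_pow ⟨2*m, by ring⟩]
    have ha0 := ne_of_gt ha
    have hb0 := ne_of_gt hb
    have hc0 := ne_of_lt hc
    have hgen : ∀ a b c : ℝ, a ≠ 0 → b ≠ 0 → c ≠ 0 →
        (a*a*b/c)^2 * (-1 * c / (a^2*b)) = a*a*b/(-c) := by
      intro a b c ha hb hc
      rw [div_pow, div_mul_div_comm, div_eq_div_iff (by positivity) (neg_ne_zero.2 hc)]
      ring
    norm_cast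
    push_cast
    exact hgen _ _ _ ha0 hb0 hc0
  have hvalpos : 0 < qfactR R m * qfactR R m * qfactR R (2*m+1) / (- qfactR R (4*m+2)) := by
    apply div_pos (by positivity) (by linarith)
  exact ⟨key, by rw [hval]; exact Complex.ofReal_im _, by rw [hval, Complex.ofReal_re]; exact hvalpos⟩
end
end
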